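/- Let n ≥ 1 and let x, y : {1,…,n} → {0,1}. In the graph Split(x,y): if there is no index i with x_i = y_i = 1, then every two vertices are at distance at most 2; if there is an index i with x_i = y_i = 1, then dist(a'_i, b'_i) ≥ 3. Hence the diameter of Split(x,y) is at most 2 if and only if there is no index i with x_i = y_i = 1. -/

import Mathlib

/-!
`A 0` and `B 0` are hubs: every vertex other than the `B' m` is equal or adjacent to `B 0`, and
every vertex other than the `A' m` to `A 0`. So only a pair `A' i`, `B' m` needs an argument:
they meet at `A 0` if `x i = 0`, at `A i.succ` if `x i = 1` and `i ≠ m`, and at `B 0` if `i = m`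
and `y i = 0`. If `x i = y i = 1`, the neighbours of `A' i` are `A i.succ` and the `B k` with
`k ≠ i.succ`, those of `B' i` are `B i.succ` and the `A k` with `k ≠ i.succ`; these sets are
disjoint and `A' i`, `B' i` are not adjacent, so their distance is at least 3.
-/

inductive SpVert (n : ℕ) : Type
  | A : Fin (n + 1) → SpVert n
  | B : Fin (n + 1) → SpVert n
  | A' : Fin n → SpVert n
  | B' : Fin n → SpVert n

def spRel {n : ℕ} (x y : Fin n → Fin 2) : SpVert n → SpVert n → Prop
  | .A _, .A _ => True
  | .B _, .B _ => True
  | .A _, .B _ => True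
  | .A k, .B' j => k ≠ j.succ
  | .B k, .A' j => k ≠ j.succ
  | .A k, .A' i => (x i = 1 ∧ k = i.succ) ∨ (x i = 0 ∧ k = 0)
  | .B k, .B' i => (y i = 1 ∧ k = i.succ) ∨ (y i = 0 ∧ k = 0)
  | _, _ => False

def SpGraph {n : ℕ} (x y : Fin n → Fin 2) : SimpleGraph (SpVert n) :=
  SimpleGraph.fromRel (spRel x y)

open SimpleGraph SpVert

@[simp] lemma Fin.zero_ne_succ {n : ℕ} (k : Fin n) : (0 : Fin (n + 1)) ≠ k.succ :=
  (Fin.succ_ne_zero k).symm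

namespace SimpleGraph

variable {V : Type*} {G : SimpleGraph V} {u v w : V}

lemma dist_le_two_of_adj_or_eq (hu : G.Adj u v ∨ u = v) (hw : G.Adj v w ∨ v = w) :
    G.dist u w ≤ 2 := by
  have : G.edist u w ≤ 2 :=
    G.edist_triangle.trans <| (add_le_add (edist_le_one_iff_adj_or_eq.2 hu)
      (edist_le_one_iff_adj_or_eq.2 hw)).trans_eq one_add_one_eq_two
  exact ENat.toNat_le_of_le_natCast this

lemma Reachable.two_lt_dist_iff (hr : G.Reachable u w) :
    2 < G.dist u w ↔ u ≠ w ∧ ¬ G.Adj u w ∧ G.commonNeighbors u w = ∅ := by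
  rw [← two_lt_edist_iff, ← hr.coe_dist_eq_edist]
  norm_cast

end SimpleGraph

namespace SpGraph

variable {n : ℕ} {x y : Fin n → Fin 2}

@[simp] lemma adj_iff {u w : SpVert n} :
    (SpGraph x y).Adj u w ↔ u ≠ w ∧ (spRel x y u w ∨ spRel x y w u) :=
  fromRel_adj _ _ _

lemma dist_A'_B'_le_two (i m : Fin n) (hi : ¬ (x i = 1 ∧ y i = 1)) :
    (SpGraph x y).dist (A' i) (B' m) ≤ 2 := by
  obtain hx | hx : x i = 0 ∨ x i = 1 := by omega
  · exact dist_le_two_of_adj_or_eq (v := A 0) (by simp [spRel, hx]) (by simp [spRel])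
  by_cases him : i = m
  · subst him
    have hy : y i = 0 := by omega
    exact dist_le_two_of_adj_or_eq (v := B 0) (by simp [spRel]) (by simp [spRel, hy])
  · exact dist_le_two_of_adj_or_eq (v := A i.succ) (by simp [spRel, hx]) (by simp [spRel, him])

lemma dist_le_two (h : ¬ ∃ i, x i = 1 ∧ y i = 1) (u w : SpVert n) :
    (SpGraph x y).dist u w ≤ 2 := by
  have hA'B' (i m : Fin n) : (SpGraph x y).dist (A' i) (B' m) ≤ 2 :=
    dist_A'_B'_le_two i m fun hi => h ⟨i, hi⟩
  cases u <;> cases w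
  case A'.B' i m => exact hA'B' i m
  case B'.A' i m => exact dist_comm.trans_le (hA'B' m i)
  case A.B' | B.B' | B'.A | B'.B | B'.B' =>
    exact dist_le_two_of_adj_or_eq (v := A 0) (by simp [spRel, em']) (by simp [spRel, em'])
  all_goals
    exact dist_le_two_of_adj_or_eq (v := B 0) (by simp [spRel, em']) (by simp [spRel, em'])

lemma two_lt_dist_A'_B' {i : Fin n} (hx : x i = 1) (hy : y i = 1) :
    2 < (SpGraph x y).dist (A' i) (B' i) := by
  have hr : (SpGraph x y).Reachable (A' i) (B' i) := by
    refine (Adj.reachable (v := B 0) ?_).trans <|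
      (Adj.reachable (v := A 0) ?_).trans (Adj.reachable ?_) <;> simp [spRel]
  refine hr.two_lt_dist_iff.2 ⟨by simp, by simp [spRel], ?_⟩
  ext (z | z | z | z) <;> simp [mem_commonNeighbors, spRel, hx, hy]

end SpGraph

theorem stmt_10_general {n : ℕ} (x y : Fin n → Fin 2) :
    ((¬ ∃ i, x i = 1 ∧ y i = 1) →
      ∀ u w : SpVert n, (SpGraph x y).dist u w ≤ 2) ∧
    (∀ i : Fin n, x i = 1 → y i = 1 →
      3 ≤ (SpGraph x y).dist (SpVert.A' i) (SpVert.B' i)) ∧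
    ((∀ u w : SpVert n, (SpGraph x y).dist u w ≤ 2) ↔
      ¬ ∃ i, x i = 1 ∧ y i = 1) :=
  ⟨SpGraph.dist_le_two, fun _ hx hy => SpGraph.two_lt_dist_A'_B' hx hy,
    fun h ⟨_, hx, hy⟩ => (SpGraph.two_lt_dist_A'_B' hx hy).not_ge (h _ _),
    SpGraph.dist_le_two⟩

theorem stmt_10 {n : ℕ} (hn : 1 ≤ n) (x y : Fin n → Fin 2) :
    ((¬ ∃ i, x i = 1 ∧ y i = 1) →
      ∀ u w : SpVert n, (SpGraph x y).dist u w ≤ 2) ∧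
    (∀ i : Fin n, x i = 1 → y i = 1 →
      3 ≤ (SpGraph x y).dist (SpVert.A' i) (SpVert.B' i)) ∧
    ((∀ u w : SpVert n, (SpGraph x y).dist u w ≤ 2) ↔
      ¬ ∃ i, x i = 1 ∧ y i = 1) :=
  stmt_10_general x y
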